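/- arXiv:1208.2388 — 2 statements merged into one kernel-verified Lean document; each statement's English description precedes it below -/
import Mathlib

section
/- For x > 0, (2/π) ∫_{-1}^{1} log|i·x^{1/2} + t| · (1 - t^2)^{1/2} dt = √(x(x+1)) − x − log(2(√(x+1) − √x)) − 1/2, where |i·x^{1/2} + t| = (x + t^2)^{1/2}. -/
/-!
Differentiate in `x` under the integral sign. The derivative of `∫ log (x + t²) √(1 - t²) dt` is
`∫ √(1 - t²) / (x + t²) dt = π (√(x + 1) / √x - 1)`, which is read off from the antiderivative
`-arcsin t + c arctan (c t / √(1 - t²))` with `c = √(x + 1) / √x`; after the factor `1 / π` this is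
also the derivative of the right-hand side. So the two sides differ by a constant, and the constant
is `0` because both sides are `log x / 2 + o(1)` as `x → ∞`: the integral is
`(π / 2) log x + O(1 / x)`, and with `u = √(x (x + 1)) - x → 1 / 2` the right-hand side is `log x / 2 + u - log (2 u) - 1 / 2`.
-/

open Real Set Filter Topology MeasureTheory

theorem eq_of_hasDerivAt_of_tendsto_sub_atTop {f g f' : ℝ → ℝ} {a : ℝ}
    (hf : ∀ y, a < y → HasDerivAt f (f' y) y) (hg : ∀ y, a < y → HasDerivAt g (f' y) y)
    (hfg : Tendsto (fun y => f y - g y) atTop (𝓝 0)) {x : ℝ} (hx : a < x) : f x = g x := by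
  have hderiv : ∀ y, a < y → HasDerivAt (fun y => f y - g y) 0 y := fun y hy =>
    sub_self (f' y) ▸ (hf y hy).sub (hg y hy)
  have hconst : ∀ z, x ≤ z → f z - g z = f x - g x := fun z hz =>
    constant_of_has_deriv_right_zero
      (fun y hy => (hderiv y (hx.trans_le hy.1)).continuousAt.continuousWithinAt)
      (fun y hy => (hderiv y (hx.trans_le hy.1)).hasDerivWithinAt) z ⟨hz, le_rfl⟩
  have hlim : Tendsto (fun y => f y - g y) atTop (𝓝 (f x - g x)) :=
    tendsto_const_nhds.congr' <| (eventually_ge_atTop x).mono fun z hz => (hconst z hz).symm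
  exact sub_eq_zero.1 (tendsto_nhds_unique hlim hfg)

section LogPotential

variable {w : ℝ → ℝ} (a b : ℝ)

theorem hasDerivAt_integral_log_add_sq_mul (hw : Continuous w) {x : ℝ} (hx : 0 < x) :
    HasDerivAt (fun y => ∫ t in a..b, log (y + t ^ 2) * w t)
      (∫ t in a..b, w t / (x + t ^ 2)) x := by
  set U := Metric.ball x (x / 2)
  have hU : U ∈ 𝓝 x := Metric.ball_mem_nhds x (by positivity)
  have hpos : ∀ y ∈ U, ∀ t : ℝ, x / 2 < y + t ^ 2 := fun y hy t => by
    have := (abs_sub_lt_iff.1 (Metric.mem_ball.1 hy)).2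
    nlinarith [sq_nonneg t]
  have hcont : ∀ y ∈ U, Continuous fun t => log (y + t ^ 2) * w t := fun y hy =>
    ((by fun_prop : Continuous fun t : ℝ => y + t ^ 2).log fun t => by
      linarith [hpos y hy t]).mul hw
  have hderiv : ∀ t, ∀ y ∈ U,
      HasDerivAt (fun y => log (y + t ^ 2) * w t) (w t / (y + t ^ 2)) y := fun t y hy => by
    have := (((hasDerivAt_id y).add_const (t ^ 2)).log
      (by simp only [id]; linarith [hpos y hy t])).mul_const (w t)
    simpa [div_eq_inv_mul] using this
  have hbound : ∀ t, ∀ y ∈ U, ‖w t / (y + t ^ 2)‖ ≤ 2 / x * |w t| := fun t y hy => by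
    have := hpos y hy t
    rw [norm_div, Real.norm_eq_abs, Real.norm_eq_abs, abs_of_pos (a := y + t ^ 2) (by linarith),
      div_eq_inv_mul, ← inv_div]
    gcongr
  exact (intervalIntegral.hasDerivAt_integral_of_dominated_loc_of_deriv_le hU
    (eventually_of_mem hU fun y hy => (hcont y hy).aestronglyMeasurable)
    ((hcont x (mem_of_mem_nhds hU)).intervalIntegrable a b)
    (hw.div (by fun_prop : Continuous fun t : ℝ => x + t ^ 2) fun t => by
      positivity).aestronglyMeasurable
    (.of_forall fun t _ => hbound t) ((continuous_const.mul hw.abs).intervalIntegrable a b)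
    (.of_forall fun t _ => hderiv t)).2

theorem tendsto_integral_log_add_sq_mul_sub_log (hw : Continuous w) :
    Tendsto (fun y => (∫ t in a..b, log (y + t ^ 2) * w t) - (∫ t in a..b, w t) * log y)
      atTop (𝓝 0) := by
  set C := |∫ t in a..b, t ^ 2 * ‖w t‖|
  have hsplit : ∀ y, 0 < y → (∫ t in a..b, log (y + t ^ 2) * w t) - (∫ t in a..b, w t) * log y
      = ∫ t in a..b, log (1 + t ^ 2 / y) * w t := fun y hy => by
    rw [← intervalIntegral.integral_mul_const, ← intervalIntegral.integral_sub]
    · refine intervalIntegral.integral_congr fun t _ => ?_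
      rw [mul_comm (w t), ← sub_mul, ← log_div (by positivity) hy.ne', add_div, div_self hy.ne']
    · exact (((by fun_prop : Continuous fun t : ℝ => y + t ^ 2).log fun t => by
        positivity).mul hw).intervalIntegrable a b
    · exact (hw.mul continuous_const).intervalIntegrable a b
  have hle : ∀ y, 0 < y → ‖∫ t in a..b, log (1 + t ^ 2 / y) * w t‖ ≤ C / y := fun y hy => by
    rw [div_eq_mul_inv, ← abs_of_pos (inv_pos.2 hy), ← abs_mul,
      ← intervalIntegral.integral_mul_const]
    refine intervalIntegral.norm_integral_le_abs_of_norm_le (.of_forall fun t => ?_)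
      (((continuous_pow 2).mul hw.norm).mul continuous_const |>.intervalIntegrable a b)
    have hlog : log (1 + t ^ 2 / y) ≤ t ^ 2 / y := by
      linarith [log_le_sub_one_of_pos (show 0 < 1 + t ^ 2 / y by positivity)]
    rw [norm_mul, Real.norm_eq_abs,
      abs_of_nonneg (log_nonneg (le_add_of_nonneg_right (by positivity)))]
    calc log (1 + t ^ 2 / y) * ‖w t‖ ≤ t ^ 2 / y * ‖w t‖ := by gcongr
      _ = t ^ 2 * ‖w t‖ * y⁻¹ := by ring
  refine squeeze_zero_norm' ?_ ((tendsto_const_nhds (x := C)).div_atTop tendsto_id)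
  filter_upwards [eventually_gt_atTop 0] with y hy
  rw [hsplit y hy]
  exact hle y hy

end LogPotential

theorem tendsto_sqrt_one_sub_sq_nhdsWithin_Ioo {a : ℝ} (ha : a ^ 2 = 1) :
    Tendsto (fun t => √(1 - t ^ 2)) (𝓝[Ioo (-1) 1] a) (𝓝[>] 0) := by
  refine tendsto_nhdsWithin_iff.2 ⟨?_, eventually_nhdsWithin_of_forall fun t ht => ?_⟩
  · have : Continuous fun t : ℝ => √(1 - t ^ 2) := by fun_prop
    simpa [ha] using this.continuousWithinAt (s := Ioo (-1) 1) (x := a) |>.tendsto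
  · exact sqrt_pos.2 (by nlinarith [ht.1, ht.2])

theorem tendsto_div_sqrt_one_sub_sq_nhdsLT_one :
    Tendsto (fun t => t / √(1 - t ^ 2)) (𝓝[<] 1) atTop := by
  have hle : 𝓝[<] (1 : ℝ) ≤ 𝓝[Ioo (-1) 1] 1 :=
    nhdsWithin_le_of_mem (Ioo_mem_nhdsLT (by norm_num))
  simp only [div_eq_mul_inv]
  exact (tendsto_nhdsWithin_of_tendsto_nhds tendsto_id).pos_mul_atTop one_pos
    ((tendsto_sqrt_one_sub_sq_nhdsWithin_Ioo (one_pow 2)).mono_left hle).inv_tendsto_nhdsGT_zero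

theorem tendsto_div_sqrt_one_sub_sq_nhdsGT_neg_one :
    Tendsto (fun t => t / √(1 - t ^ 2)) (𝓝[>] (-1)) atBot := by
  have hle : 𝓝[>] (-1 : ℝ) ≤ 𝓝[Ioo (-1) 1] (-1) :=
    nhdsWithin_le_of_mem (Ioo_mem_nhdsGT (by norm_num))
  simp only [div_eq_mul_inv]
  exact (tendsto_nhdsWithin_of_tendsto_nhds tendsto_id).neg_mul_atTop neg_one_lt_zero
    ((tendsto_sqrt_one_sub_sq_nhdsWithin_Ioo (by norm_num)).mono_left hle).inv_tendsto_nhdsGT_zero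

theorem hasDerivAt_neg_arcsin_add_mul_arctan {x c t : ℝ} (hx : 0 < x) (hc : c ^ 2 * x = x + 1)
    (ht : t ∈ Ioo (-1 : ℝ) 1) :
    HasDerivAt (fun t => -arcsin t + c * arctan (c * (t / √(1 - t ^ 2))))
      (√(1 - t ^ 2) / (x + t ^ 2)) t := by
  have h1 : 0 < 1 - t ^ 2 := by nlinarith [ht.1, ht.2]
  set s := √(1 - t ^ 2) with hs_def
  have hs : 0 < s := sqrt_pos.2 h1
  have hs2 : s ^ 2 = 1 - t ^ 2 := sq_sqrt h1.le
  have hsqrt : HasDerivAt (fun t => √(1 - t ^ 2)) (-t / s) t := by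
    refine (((hasDerivAt_pow 2 t).const_sub 1).sqrt h1.ne').congr_deriv ?_
    field_simp
    ring
  have hquot : HasDerivAt (fun t => t / √(1 - t ^ 2)) (1 / s ^ 3) t := by
    refine ((hasDerivAt_id' t).div hsqrt hs.ne').congr_deriv ?_
    field_simp
    linear_combination s ^ 2 * hs2
  have harcsin : HasDerivAt arcsin (1 / s) t := by
    simpa [hs_def] using hasDerivAt_arcsin ht.1.ne' ht.2.ne
  refine (harcsin.neg.add ((hquot.const_mul c).arctan.const_mul c)).congr_deriv ?_
  rw [← hs_def]
  field_simp
  rw [hs2]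
  linear_combination (1 - t ^ 2) * hc

theorem integral_sqrt_one_sub_sq_div_add_sq {x : ℝ} (hx : 0 < x) :
    ∫ t in (-1 : ℝ)..1, √(1 - t ^ 2) / (x + t ^ 2) = π * (√(x + 1) / √x - 1) := by
  set c := √(x + 1) / √x
  have hc_pos : 0 < c := by positivity
  have hc : c ^ 2 * x = x + 1 := by
    rw [div_pow, sq_sqrt (by positivity), sq_sqrt hx.le, div_mul_cancel₀ _ hx.ne']
  have harcsin (a : ℝ) : Tendsto (fun t => -arcsin t) (𝓝 a) (𝓝 (-arcsin a)) :=
    continuous_arcsin.neg.tendsto a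
  have hright := ((harcsin 1).mono_left nhdsWithin_le_nhds).add <|
    ((tendsto_arctan_atTop.mono_right nhdsWithin_le_nhds).comp
      (tendsto_div_sqrt_one_sub_sq_nhdsLT_one.const_mul_atTop hc_pos)).const_mul c
  have hleft := ((harcsin (-1)).mono_left nhdsWithin_le_nhds).add <|
    ((tendsto_arctan_atBot.mono_right nhdsWithin_le_nhds).comp
      (tendsto_div_sqrt_one_sub_sq_nhdsGT_neg_one.const_mul_atBot hc_pos)).const_mul c
  rw [intervalIntegral.integral_eq_sub_of_hasDerivAt_of_tendsto (by norm_num)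
    (fun t ht => hasDerivAt_neg_arcsin_add_mul_arctan hx hc ht)
    (((by fun_prop : Continuous fun t : ℝ => √(1 - t ^ 2)).div
      (by fun_prop : Continuous fun t : ℝ => x + t ^ 2) fun t => by positivity).intervalIntegrable
        _ _) hleft hright]
  simp only [arcsin_one, arcsin_neg]
  ring

noncomputable def semicircleLogClosedForm (y : ℝ) : ℝ :=
  √(y * (y + 1)) - y - log (2 * (√(y + 1) - √y)) - 1 / 2

theorem hasDerivAt_semicircleLogClosedForm {x : ℝ} (hx : 0 < x) :
    HasDerivAt semicircleLogClosedForm (√(x + 1) / √x - 1) x := by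
  have hba : 0 < √(x + 1) - √x := sub_pos.2 (sqrt_lt_sqrt hx.le (lt_add_one x))
  have hb2 : √(x + 1) ^ 2 = x + 1 := sq_sqrt (by positivity)
  have hpoly : HasDerivAt (fun y => y * (y + 1)) (2 * x + 1) x := by
    refine ((hasDerivAt_id' x).mul ((hasDerivAt_id' x).add_const 1)).congr_deriv ?_
    ring
  have hdiff : HasDerivAt (fun y => 2 * (√(y + 1) - √y))
      (2 * (1 / (2 * √(x + 1)) - 1 / (2 * √x))) x := by
    simpa using ((((hasDerivAt_id x).add_const 1).sqrt (by positivity)).sub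
      ((hasDerivAt_id x).sqrt hx.ne')).const_mul 2
  refine (((hpoly.sqrt (by positivity)).sub (hasDerivAt_id x)).sub
    (hdiff.log (by positivity))).sub_const _ |>.congr_deriv ?_
  rw [sqrt_mul hx.le]
  field_simp
  linear_combination (2 * √x - 2 * √(x + 1)) * hb2

theorem sqrt_mul_add_one_sub_self {y : ℝ} (hy : 0 < y) :
    √(y * (y + 1)) - y = (√(1 + y⁻¹) + 1)⁻¹ := by
  have hs : √(1 + y⁻¹) ^ 2 = 1 + y⁻¹ := sq_sqrt (by positivity)
  have hprod : √(y * (y + 1)) = y * √(1 + y⁻¹) := by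
    rw [show y * (y + 1) = y ^ 2 * (1 + y⁻¹) by field_simp, sqrt_mul (sq_nonneg y),
      sqrt_sq hy.le]
  rw [hprod]
  refine eq_inv_of_mul_eq_one_left ?_
  linear_combination y * hs + mul_inv_cancel₀ hy.ne'

theorem tendsto_sqrt_mul_add_one_sub_self :
    Tendsto (fun y => √(y * (y + 1)) - y) atTop (𝓝 (1 / 2)) := by
  have hsqrt : Tendsto (fun y : ℝ => √(1 + y⁻¹)) atTop (𝓝 1) := by
    simpa using ((tendsto_const_nhds (x := (1 : ℝ))).add tendsto_inv_atTop_zero).sqrt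
  have hlim : Tendsto (fun y : ℝ => (√(1 + y⁻¹) + 1)⁻¹) atTop (𝓝 (1 / 2)) := by
    simpa [one_add_one_eq_two] using (hsqrt.add_const 1).inv₀ (by norm_num)
  refine hlim.congr' ?_
  filter_upwards [eventually_gt_atTop 0] with y hy
  rw [sqrt_mul_add_one_sub_self hy]

theorem tendsto_semicircleLogClosedForm_sub_half_log :
    Tendsto (fun y => semicircleLogClosedForm y - 1 / 2 * log y) atTop (𝓝 0) := by
  have hcont : ContinuousAt (fun u => u - log (2 * u) - 1 / 2) (1 / 2) := by
    have : (2 : ℝ) * (1 / 2) ≠ 0 := by norm_num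
    fun_prop (disch := exact this)
  have hlim : Tendsto (fun y => (√(y * (y + 1)) - y) - log (2 * (√(y * (y + 1)) - y)) - 1 / 2)
      atTop (𝓝 0) := by
    simpa [Function.comp_def] using hcont.tendsto.comp tendsto_sqrt_mul_add_one_sub_self
  refine hlim.congr' ?_
  filter_upwards [eventually_gt_atTop 0] with y hy
  have ha : 0 < √y := sqrt_pos.2 hy
  have hba : 0 < √(y + 1) - √y := sub_pos.2 (sqrt_lt_sqrt hy.le (lt_add_one y))
  have hlog : log (2 * (√(y * (y + 1)) - y)) = 1 / 2 * log y + log (2 * (√(y + 1) - √y)) := by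
    rw [one_div_mul_eq_div, ← log_sqrt hy.le, ← log_mul ha.ne' (by positivity), sqrt_mul hy.le]
    congr 1
    linear_combination 2 * sq_sqrt hy.le
  rw [semicircleLogClosedForm, hlog]
  ring

theorem log_integral_semicircle (x : ℝ) (hx : 0 < x) :
    (2 / π) * ∫ t in (-1 : ℝ)..1, (1 / 2) * Real.log (x + t ^ 2) * Real.sqrt (1 - t ^ 2)
      = Real.sqrt (x * (x + 1)) - x
        - Real.log (2 * (Real.sqrt (x + 1) - Real.sqrt x)) - 1 / 2 := by
  have hw : Continuous fun t : ℝ => √(1 - t ^ 2) := by fun_prop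
  have hhalf (y : ℝ) : ∫ t in (-1 : ℝ)..1, 1 / 2 * log (y + t ^ 2) * √(1 - t ^ 2)
      = 1 / 2 * ∫ t in (-1 : ℝ)..1, log (y + t ^ 2) * √(1 - t ^ 2) := by
    simp_rw [mul_assoc, intervalIntegral.integral_const_mul]
  rw [hhalf]
  refine eq_of_hasDerivAt_of_tendsto_sub_atTop
    (f := fun y => 2 / π * (1 / 2 * ∫ t in (-1 : ℝ)..1, log (y + t ^ 2) * √(1 - t ^ 2)))
    (g := semicircleLogClosedForm) (fun y hy => ?_)
    (fun y hy => hasDerivAt_semicircleLogClosedForm hy) ?_ hx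
  · refine (((hasDerivAt_integral_log_add_sq_mul (-1) 1 hw hy).const_mul (1 / 2)).const_mul
      (2 / π)).congr_deriv ?_
    rw [integral_sqrt_one_sub_sq_div_add_sq hy]
    field_simp
  · have := ((tendsto_integral_log_add_sq_mul_sub_log (-1) 1 hw).const_mul π⁻¹).sub
      tendsto_semicircleLogClosedForm_sub_half_log
    rw [integral_sqrt_one_sub_sq, mul_zero, sub_zero] at this
    refine this.congr fun y => ?_
    field_simp
    ring
end

section
/- For x > 0 and t ∈ [0, 1], the function v(t) = log(x + t) satisfies: the Chebyshev-type Fourier coefficients a_k = (2/π) ∫_0^π log(x + 1/2 + (1/2)cos θ) cos(kθ) dθ equal a_k = −(2/k) ν^k for k ≥ 1, where ν = −(2x + 1) + 2√(x² + x). -/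
/-!
Integrating by parts, the `k`-th coefficient becomes `(J (k - 1) - J (k + 1)) / (2k)` with
`J n = ∫ θ in 0..π, cos (n θ) / (b + cos θ)` and `b = 2x + 1`. From
`cos ((n + 2) θ) + cos (n θ) = 2 cos θ cos ((n + 1) θ)` we get `J (n + 2) + 2b J (n + 1) + J n = 0`,
whose characteristic roots are `ν = √(b² - 1) - b` and `1 / ν`. Since `√(b² - 1) / (b + cos θ)`
is the Poisson kernel `(1 - ν²) / (1 - 2ν cos θ + ν²)`, whose integral over `[0, π]` is `π`, we
have `J 0 = π / √(b² - 1)`, and `J 1 = π - b J 0`; hence `J n = π νⁿ / √(b² - 1)`.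
-/

open Real intervalIntegral
open MeasureTheory (volume)

section PoissonKernel

variable {r : ℝ}

theorem one_sub_mul_cos_pos (hr : |r| < 1) (θ : ℝ) : 0 < 1 - r * cos θ := by
  have : |r * cos θ| < 1 := by
    rw [abs_mul]
    nlinarith [abs_cos_le_one θ, abs_nonneg r, abs_nonneg (cos θ)]
  linarith [le_abs_self (r * cos θ)]

theorem poissonKernel_denom_pos (hr : |r| < 1) (θ : ℝ) : 0 < 1 - 2 * r * cos θ + r ^ 2 := by
  nlinarith [one_sub_mul_cos_pos hr θ, sin_sq_add_cos_sq θ, sq_nonneg (r * sin θ)]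

-- Unlike the half-angle primitive `2 arctan ((1 + r) / (1 - r) * tan (θ / 2))`, this one is
-- smooth on all of `ℝ`, so `∫ θ in 0..π` needs no limit at `π`.
theorem hasDerivAt_poissonKernel_primitive (hr : |r| < 1) (θ : ℝ) :
    HasDerivAt (fun t ↦ t + 2 * arctan (r * sin t / (1 - r * cos t)))
      ((1 - r ^ 2) / (1 - 2 * r * cos θ + r ^ 2)) θ := by
  have hq := (one_sub_mul_cos_pos hr θ).ne'
  have hp := (poissonKernel_denom_pos hr θ).ne'
  have hquot : HasDerivAt (fun t ↦ r * sin t / (1 - r * cos t))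
      ((r * cos θ * (1 - r * cos θ) - r * sin θ * (r * sin θ)) / (1 - r * cos θ) ^ 2) θ :=
    ((hasDerivAt_sin θ).const_mul r).div
      (((hasDerivAt_cos θ).const_mul r).const_sub 1 |>.congr_deriv (by ring)) hq
  have hsq : 1 + (r * sin θ / (1 - r * cos θ)) ^ 2
      = (1 - 2 * r * cos θ + r ^ 2) / (1 - r * cos θ) ^ 2 := by
    field_simp
    linear_combination r ^ 2 * sin_sq_add_cos_sq θ
  refine ((hasDerivAt_id' θ).add (hquot.arctan.const_mul 2)).congr_deriv ?_
  rw [hsq]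
  field_simp
  linear_combination (-2 * r ^ 2) * sin_sq_add_cos_sq θ

theorem integral_poissonKernel (hr : |r| < 1) :
    ∫ θ in 0..π, (1 - r ^ 2) / (1 - 2 * r * cos θ + r ^ 2) = π := by
  rw [integral_eq_sub_of_hasDerivAt (fun θ _ ↦ hasDerivAt_poissonKernel_primitive hr θ)]
  · simp
  · exact (Continuous.div (by fun_prop) (by fun_prop)
      (fun θ ↦ (poissonKernel_denom_pos hr θ).ne')).intervalIntegrable _ _

end PoissonKernel

theorem integral_cos_nat_mul_eq_zero {n : ℕ} (hn : n ≠ 0) : ∫ θ in 0..π, cos (n * θ) = 0 := by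
  simp [integral_comp_mul_left (fun θ ↦ cos θ) (Nat.cast_ne_zero.2 hn), sin_nat_mul_pi]

section CosRatio

variable {b : ℝ}

theorem add_cos_pos (hb : 1 < b) (θ : ℝ) : 0 < b + cos θ := by
  linarith [neg_one_le_cos θ]

theorem continuous_cos_nat_mul_div_add_cos (hb : 1 < b) (n : ℕ) :
    Continuous fun θ ↦ cos (n * θ) / (b + cos θ) :=
  Continuous.div (by fun_prop) (by fun_prop) fun θ ↦ (add_cos_pos hb θ).ne'

theorem abs_sqrt_sq_sub_one_sub_lt_one (hb : 1 < b) : |√(b ^ 2 - 1) - b| < 1 := by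
  have hs := sq_sqrt (show 0 ≤ b ^ 2 - 1 by nlinarith)
  have hs0 := sqrt_nonneg (b ^ 2 - 1)
  rw [abs_lt]
  constructor <;> nlinarith

theorem poissonKernel_eq_sqrt_div_add_cos (hb : 1 < b) (θ : ℝ) :
    (1 - (√(b ^ 2 - 1) - b) ^ 2) / (1 - 2 * (√(b ^ 2 - 1) - b) * cos θ + (√(b ^ 2 - 1) - b) ^ 2)
      = √(b ^ 2 - 1) / (b + cos θ) := by
  have hs := sq_sqrt (show 0 ≤ b ^ 2 - 1 by nlinarith)
  have hden := (add_cos_pos hb θ).ne'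
  rw [div_eq_div_iff (poissonKernel_denom_pos (abs_sqrt_sq_sub_one_sub_lt_one hb) θ).ne' hden]
  linear_combination (b + cos θ - √(b ^ 2 - 1)) * hs

noncomputable def cosRatioIntegral (b : ℝ) (n : ℕ) : ℝ :=
  ∫ θ in 0..π, cos (n * θ) / (b + cos θ)

theorem cosRatioIntegral_zero (hb : 1 < b) : cosRatioIntegral b 0 = π / √(b ^ 2 - 1) := by
  have hs : 0 < √(b ^ 2 - 1) := sqrt_pos.2 (by nlinarith)
  have h := integral_poissonKernel (abs_sqrt_sq_sub_one_sub_lt_one hb)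
  simp_rw [poissonKernel_eq_sqrt_div_add_cos hb, div_eq_mul_one_div √(b ^ 2 - 1),
    integral_const_mul] at h
  rw [eq_div_iff hs.ne', ← h, mul_comm, cosRatioIntegral]
  simp

theorem cosRatioIntegral_one (hb : 1 < b) :
    cosRatioIntegral b 1 = π - b * cosRatioIntegral b 0 := by
  have hint := (continuous_cos_nat_mul_div_add_cos hb 0).intervalIntegrable (μ := volume) 0 π
  rw [cosRatioIntegral, cosRatioIntegral, ← integral_const_mul, eq_sub_iff_add_eq,
    ← integral_add
      ((continuous_cos_nat_mul_div_add_cos hb 1).intervalIntegrable (μ := volume) 0 π)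
      (hint.const_mul b)]
  trans ∫ _ in 0..π, (1 : ℝ)
  · refine integral_congr fun θ _ ↦ ?_
    have := (add_cos_pos hb θ).ne'
    simp only [Nat.cast_one, Nat.cast_zero, one_mul, zero_mul, cos_zero]
    field_simp
    ring
  · simp

theorem cosRatioIntegral_add_two (hb : 1 < b) (n : ℕ) :
    cosRatioIntegral b (n + 2) + 2 * b * cosRatioIntegral b (n + 1) + cosRatioIntegral b n
      = 0 := by
  have hint (m : ℕ) :=
    (continuous_cos_nat_mul_div_add_cos hb m).intervalIntegrable (μ := volume) 0 π
  rw [cosRatioIntegral, cosRatioIntegral, cosRatioIntegral, ← integral_const_mul,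
    ← integral_add (hint _) ((hint _).const_mul _),
    ← integral_add ((hint _).add ((hint _).const_mul _)) (hint _)]
  trans ∫ θ in 0..π, 2 * cos ((n + 1 : ℕ) * θ)
  · refine integral_congr fun θ _ ↦ ?_
    have := (add_cos_pos hb θ).ne'
    have hsum : cos ((n + 2 : ℕ) * θ) + cos (n * θ) = 2 * cos ((n + 1 : ℕ) * θ) * cos θ := by
      rw [cos_add_cos]
      push_cast
      ring_nf
    calc _ = (cos ((n + 2 : ℕ) * θ) + cos (n * θ) + 2 * b * cos ((n + 1 : ℕ) * θ))
          / (b + cos θ) := by ring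
      _ = _ := by rw [hsum, div_eq_iff this]; ring
  · rw [integral_const_mul, integral_cos_nat_mul_eq_zero n.succ_ne_zero, mul_zero]

theorem cosRatioIntegral_eq (hb : 1 < b) (n : ℕ) :
    cosRatioIntegral b n = π * (√(b ^ 2 - 1) - b) ^ n / √(b ^ 2 - 1) := by
  have hs := sq_sqrt (show 0 ≤ b ^ 2 - 1 by nlinarith)
  have hs0 : √(b ^ 2 - 1) ≠ 0 := (sqrt_pos.2 (by nlinarith)).ne'
  induction n using Nat.twoStepInduction with
  | zero => simp [cosRatioIntegral_zero hb]
  | one =>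
    rw [cosRatioIntegral_one hb, cosRatioIntegral_zero hb]
    field_simp
  | more n ih₀ ih₁ =>
    have h := cosRatioIntegral_add_two hb n
    rw [ih₀, ih₁] at h
    linear_combination h - π * (√(b ^ 2 - 1) - b) ^ n / √(b ^ 2 - 1) * hs

theorem integral_log_mul_add_cos_mul_cos_eq_cosRatioIntegral_sub (hb : 1 < b) {c : ℝ} (hc : c ≠ 0)
    (n : ℕ) :
    ∫ θ in 0..π, log (c * (b + cos θ)) * cos ((n + 1 : ℕ) * θ)
      = (cosRatioIntegral b n - cosRatioIntegral b (n + 2)) / (2 * (n + 1 : ℕ)) := by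
  set k : ℝ := ((n + 1 : ℕ) : ℝ)
  have hk : k ≠ 0 := Nat.cast_ne_zero.2 n.succ_ne_zero
  have hlog (θ : ℝ) : HasDerivAt (fun t ↦ log (c * (b + cos t))) (-sin θ / (b + cos θ)) θ := by
    have hden := (add_cos_pos hb θ).ne'
    refine (((hasDerivAt_cos θ).const_add b).const_mul c).log (mul_ne_zero hc hden)
      |>.congr_deriv ?_
    field_simp
  have hsin (θ : ℝ) : HasDerivAt (fun t ↦ sin (k * t) / k) (cos (k * θ)) θ := by
    refine (((hasDerivAt_id' θ).const_mul k).sin.div_const k).congr_deriv ?_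
    field_simp
  have hcont : Continuous fun θ ↦ -sin θ / (b + cos θ) :=
    Continuous.div (by fun_prop) (by fun_prop) fun θ ↦ (add_cos_pos hb θ).ne'
  rw [integral_mul_deriv_eq_deriv_mul (fun θ _ ↦ hlog θ) (fun θ _ ↦ hsin θ)
    (hcont.intervalIntegrable _ _)
    ((by fun_prop : Continuous fun θ ↦ cos (k * θ)).intervalIntegrable _ _)]
  have hkπ : sin (k * π) = 0 := sin_nat_mul_pi (n + 1)
  simp only [hkπ, mul_zero, sin_zero, zero_div, sub_self, zero_sub]
  rw [← integral_neg, cosRatioIntegral, cosRatioIntegral, ← integral_sub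
      ((continuous_cos_nat_mul_div_add_cos hb n).intervalIntegrable _ _)
      ((continuous_cos_nat_mul_div_add_cos hb (n + 2)).intervalIntegrable _ _),
    ← integral_div]
  refine integral_congr fun θ _ ↦ ?_
  have hprod : cos (n * θ) - cos ((n + 2 : ℕ) * θ) = 2 * sin θ * sin (k * θ) := by
    rw [show (n : ℝ) * θ = k * θ - θ by push_cast [k]; ring,
      show ((n + 2 : ℕ) : ℝ) * θ = k * θ + θ by push_cast [k]; ring, cos_sub, cos_add]
    ring
  have hden := (add_cos_pos hb θ).ne'
  calc _ = 2 * sin θ * sin (k * θ) / (b + cos θ) / (2 * k) := by field_simp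
    _ = _ := by rw [← hprod, sub_div]

theorem integral_log_mul_add_cos_mul_cos (hb : 1 < b) {c : ℝ} (hc : c ≠ 0) (n : ℕ) :
    ∫ θ in 0..π, log (c * (b + cos θ)) * cos ((n + 1 : ℕ) * θ)
      = -π * (√(b ^ 2 - 1) - b) ^ (n + 1) / (n + 1 : ℕ) := by
  have hs := sq_sqrt (show 0 ≤ b ^ 2 - 1 by nlinarith)
  have hs0 : √(b ^ 2 - 1) ≠ 0 := (sqrt_pos.2 (by nlinarith)).ne'
  rw [integral_log_mul_add_cos_mul_cos_eq_cosRatioIntegral_sub hb hc, cosRatioIntegral_eq hb,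
    cosRatioIntegral_eq hb]
  field_simp
  linear_combination (√(b ^ 2 - 1) - b) ^ n * hs

end CosRatio

theorem chebyshev_fourier_log_coefficient (x : ℝ) (hx : 0 < x) (k : ℕ) (hk : 1 ≤ k) :
    (2 / π) * ∫ θ in (0 : ℝ)..π,
        Real.log (x + 1 / 2 + (1 / 2) * Real.cos θ) * Real.cos (k * θ)
      = -(2 / (k : ℝ)) * (-(2 * x + 1) + 2 * Real.sqrt (x ^ 2 + x)) ^ k := by
  obtain ⟨n, rfl⟩ := Nat.exists_eq_add_of_le' hk
  have hsqrt : √((2 * x + 1) ^ 2 - 1) = 2 * √(x ^ 2 + x) := by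
    rw [show (2 * x + 1) ^ 2 - 1 = 2 ^ 2 * (x ^ 2 + x) by ring, sqrt_mul' _ (by positivity),
      sqrt_sq zero_le_two]
  simp_rw [show ∀ θ, x + 1 / 2 + 1 / 2 * cos θ = 1 / 2 * (2 * x + 1 + cos θ) from fun θ ↦ by ring]
  rw [integral_log_mul_add_cos_mul_cos (by linarith) (by norm_num), hsqrt]
  field_simp
  ring
end
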